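/- Let V and E be finite types and src, tgt : E → V maps with src e ≠ tgt e for every e ∈ E. Define the unsigned incidence matrix |A| : V × E → ℝ by |A|(v,e) = 1 if v = src e or v = tgt e, and |A|(v,e) = 0 otherwise. Assume the simple graph on V in which distinct vertices v, w are adjacent if and only if some edge e satisfies {src e, tgt e} = {v, w} is connected, and let S ⊆ V be a nonempty set of vertices. Let Λ : E → ℝ assign a positive weight Λ_e > 0 to each edge, and define the matrix W indexed by the demand nodes D = V ∖ S by W(u,v) = Σ_{e∈E} |A|(u,e)·Λ_e·|A|(v,e). Then W is symmetric positive definite (xᵀWx > 0 for every nonzero x ∈ ℝ^D); in particular W is invertible. -/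

import Mathlib

/-!
Writing `B` for the unsigned incidence matrix restricted to the demand rows, `W = B Λ Bᵀ`, so
`xᵀ W x = Σ_e Λ_e ((Bᵀ x)_e)²` and it suffices that `Bᵀ` is injective. If `Bᵀ x = 0`, extend `x`
by zero to the slack nodes: every edge `e` then gives `x (src e) + x (tgt e) = 0`, so along any
walk the vanishing of `x` propagates, and by connectivity it spreads from a slack node to all
of `V`.
-/

open Matrix

theorem SimpleGraph.Reachable.eq_zero_iff_of_forall_adj_add_eq_zero {V α : Type*} [AddGroup α]
    {G : SimpleGraph V} {f : V → α} (hf : ∀ v w, G.Adj v w → f v + f w = 0) {v w : V}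
    (h : G.Reachable v w) : f v = 0 ↔ f w = 0 := by
  obtain ⟨p⟩ := h
  induction p with
  | nil => rfl
  | cons hadj _ ih => rw [← ih, eq_neg_of_add_eq_zero_left (hf _ _ hadj), neg_eq_zero]

theorem Matrix.vecMul_submatrix_val {ι E R : Type*} [Fintype ι] [NonUnitalNonAssocSemiring R]
    {p : ι → Prop} [DecidablePred p] (M : Matrix ι E R) (x : {i // p i} → R) :
    x ᵥ* M.submatrix Subtype.val id = (fun i => if h : p i then x ⟨i, h⟩ else 0) ᵥ* M := by
  ext e
  simp only [vecMul, dotProduct, submatrix_apply, id_eq]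
  refine (Finset.sum_congr_set {i | p i} (fun i => (if h : p i then x ⟨i, h⟩ else 0) * M i e)
    (fun i => x i * M i e) (fun i hi => ?_) (fun i hi => ?_)).symm
  · simp only [dif_pos (show p i from hi)]
  · simp [dif_neg (show ¬p i from hi)]

section Incidence

variable {V E : Type*} [DecidableEq V] (R : Type*)

/-- The unsigned incidence matrix `|A|` of the multigraph with edge maps `src tgt : E → V`. -/
def unsignedIncidence [Zero R] [One R] (src tgt : E → V) : Matrix V E R :=
  of fun v e => if v = src e ∨ v = tgt e then 1 else 0

/-- The matrix `|A_d|`: the rows of `unsignedIncidence` at the demand nodes `v ∉ S`. -/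
def demandIncidence [Zero R] [One R] (src tgt : E → V) (S : Finset V) :
    Matrix {v // v ∉ S} E R :=
  (unsignedIncidence R src tgt).submatrix Subtype.val id

variable {R} [Fintype V] {src tgt : E → V}

theorem vecMul_unsignedIncidence_apply [NonAssocSemiring R] (f : V → R) {e : E}
    (he : src e ≠ tgt e) : (f ᵥ* unsignedIncidence R src tgt) e = f (src e) + f (tgt e) := by
  simp only [vecMul, dotProduct, unsignedIncidence, of_apply, mul_ite, mul_one, mul_zero]
  rw [Finset.sum_ite, Finset.sum_const_zero, add_zero, Finset.filter_or, Finset.filter_eq',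
    Finset.filter_eq', if_pos (Finset.mem_univ _), if_pos (Finset.mem_univ _),
    Finset.sum_union (Finset.disjoint_singleton.2 he), Finset.sum_singleton, Finset.sum_singleton]

variable [Ring R] {G : SimpleGraph V} (hconn : G.Connected)
  (hedge : ∀ v w, G.Adj v w → ∃ e, ({src e, tgt e} : Set V) = {v, w})
include hconn hedge

theorem eq_zero_of_vecMul_unsignedIncidence_eq_zero {f : V → R}
    (hf : f ᵥ* unsignedIncidence R src tgt = 0) {s : V} (hs : f s = 0) : f = 0 := by
  have hadj : ∀ v w, G.Adj v w → f v + f w = 0 := by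
    intro v w hvw
    obtain ⟨e, he⟩ := hedge v w hvw
    have hsum (hne : src e ≠ tgt e) : f (src e) + f (tgt e) = 0 := by
      rw [← vecMul_unsignedIncidence_apply f hne, hf, Pi.zero_apply]
    rcases Set.pair_eq_pair_iff.1 he with ⟨rfl, rfl⟩ | ⟨rfl, rfl⟩
    · exact hsum (G.ne_of_adj hvw)
    · rw [add_comm]
      exact hsum (G.ne_of_adj hvw).symm
  funext v
  exact ((hconn.preconnected v s).eq_zero_iff_of_forall_adj_add_eq_zero hadj).2 hs

theorem injective_vecMul_demandIncidence {S : Finset V} (hS : S.Nonempty) :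
    Function.Injective (demandIncidence R src tgt S).vecMul := by
  intro x y hxy
  rw [← sub_eq_zero, ← sub_vecMul, demandIncidence, vecMul_submatrix_val] at hxy
  obtain ⟨s, hs⟩ := hS
  have hzero := eq_zero_of_vecMul_unsignedIncidence_eq_zero hconn hedge hxy (s := s)
    (by simp [hs])
  funext u
  simpa [u.2, sub_eq_zero] using congrFun hzero u

theorem posDef_demandIncidence_mul_diagonal_mul_transpose [Fintype E] [DecidableEq E]
    {S : Finset V} (hS : S.Nonempty) {Λ : E → ℝ} (hΛ : ∀ e, 0 < Λ e) :
    (demandIncidence ℝ src tgt S * diagonal Λ * (demandIncidence ℝ src tgt S)ᵀ).PosDef :=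
  (posDef_diagonal_iff.2 hΛ).mul_mul_conjTranspose_same
    (injective_vecMul_demandIncidence hconn hedge hS)

end Incidence

theorem demand_node_weighted_gram_posDef_general
    (V E : Type*) [Fintype V] [Fintype E] [DecidableEq V]
    (src tgt : E → V)
    (G : SimpleGraph V)
    (hG : ∀ v w : V, G.Adj v w ↔ v ≠ w ∧ ∃ e, ({src e, tgt e} : Set V) = {v, w})
    (hconn : G.Connected)
    (absA : V → E → ℝ)
    (habsA : ∀ v e, absA v e = if v = src e ∨ v = tgt e then 1 else 0)
    (S : Finset V) (hS : S.Nonempty)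
    (Λ : E → ℝ) (hΛ : ∀ e, 0 < Λ e)
    (W : Matrix {v : V // v ∉ S} {v : V // v ∉ S} ℝ)
    (hW : ∀ u v : {v : V // v ∉ S}, W u v = ∑ e, absA u.1 e * Λ e * absA v.1 e) :
    W.PosDef ∧ IsUnit W := by
  classical
  have hW_eq : W = demandIncidence ℝ src tgt S * diagonal Λ * (demandIncidence ℝ src tgt S)ᵀ := by
    ext u v
    simp [hW, habsA, demandIncidence, unsignedIncidence, mul_apply, diagonal_apply]
  have hpd : W.PosDef := hW_eq ▸
    posDef_demandIncidence_mul_diagonal_mul_transpose hconn (fun v w h => ((hG v w).1 h).2) hS hΛ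
  exact ⟨hpd, hpd.isUnit⟩

/-- For a connected gas network graph with nonempty slack-node set `S` and positive edge
weights `Λ`, the matrix `W = |A_d| Λ |A_d|ᵀ` over the demand nodes `D = V \ S`
(with `W(u,v) = Σ_e |A|(u,e) Λ_e |A|(v,e)`) is symmetric positive definite, and in
particular invertible. -/
theorem demand_node_weighted_gram_posDef
    (V E : Type*) [Fintype V] [Fintype E] [DecidableEq V]
    (src tgt : E → V) (hloop : ∀ e, src e ≠ tgt e)
    (G : SimpleGraph V)
    (hG : ∀ v w : V, G.Adj v w ↔ v ≠ w ∧ ∃ e, ({src e, tgt e} : Set V) = {v, w})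
    (hconn : G.Connected)
    (absA : V → E → ℝ)
    (habsA : ∀ v e, absA v e = if v = src e ∨ v = tgt e then 1 else 0)
    (S : Finset V) (hS : S.Nonempty)
    (Λ : E → ℝ) (hΛ : ∀ e, 0 < Λ e)
    (W : Matrix {v : V // v ∉ S} {v : V // v ∉ S} ℝ)
    (hW : ∀ u v : {v : V // v ∉ S}, W u v = ∑ e, absA u.1 e * Λ e * absA v.1 e) :
    W.PosDef ∧ IsUnit W :=
  demand_node_weighted_gram_posDef_general V E src tgt G hG hconn absA habsA S hS Λ hΛ W hW
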